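/- Let A be a nonempty finite alphabet and let (w_n)_{n∈ℕ} be a family of words over A whose lengths grow at most linearly, i.e., there exist constants b > 0 and n₁ ∈ ℕ such that |w_n| ≤ b·n for all n ≥ n₁. Then there exists a real constant p > 0 such that lim_{n→∞} |{w ∈ Aⁿ : w_{⌈p·log₂ n⌉} is a subword of w}| / |A|ⁿ = 1 (the quotient taken in ℝ, with ⌈·⌉ the ceiling function). -/

import Mathlib

/-!
Let `q = |A|` and `k = |v|`. Cutting a word of length `n` into `⌊n/k⌋` consecutive blocks of
length `k`, a word avoiding `v` has no block equal to `v`, so the fraction of such words is at most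
`(1 - q⁻ᵏ)^⌊n/k⌋ ≤ qᵏ/⌊n/k⌋ ≤ 2kqᵏ/n`. For `v = w ⌈p log₂ n⌉` linear growth gives
`k ≤ α ln n + b` with `α = bp / ln 2`; choosing `p` so that `α ln q ≤ 1/2` makes `qᵏ = O(√n)`,
and the fraction of avoiding words is `O(log n / √n) → 0`.
-/

open Filter Set

lemma mul_mul_one_sub_pow_le_one {y : ℝ} (hy₀ : 0 ≤ y) (hy₁ : y ≤ 1) (m : ℕ) :
    m * y * (1 - y) ^ m ≤ 1 := by
  calc m * y * (1 - y) ^ m ≤ m * y * Real.exp (-y) ^ m := by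
        gcongr
        exact Real.one_sub_le_exp_neg y
    _ = m * y * Real.exp (-(m * y)) := by rw [← Real.exp_nat_mul]; ring_nf
    _ ≤ Real.exp (-1) := Real.mul_exp_neg_le_exp_neg_one _
    _ ≤ 1 := by simp

lemma tendsto_mul_pow_div_of_le_mul_log {ℓ : ℕ → ℕ} {q α c : ℝ} (hq : 1 ≤ q)
    (hα : α * Real.log q ≤ 1 / 2) (hℓ : ∀ᶠ n : ℕ in atTop, (ℓ n : ℝ) ≤ α * Real.log n + c) :
    Tendsto (fun n : ℕ => ℓ n * q ^ ℓ n / n) atTop (nhds 0) := by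
  have hlog : Tendsto (fun x : ℝ => (α * Real.log x + c) / √x) atTop (nhds 0) := by
    refine Asymptotics.IsLittleO.tendsto_div_nhds_zero ?_
    rw [show Real.sqrt = fun x => x ^ (1 / 2 : ℝ) from funext Real.sqrt_eq_rpow]
    refine ((isLittleO_log_rpow_atTop (by norm_num)).const_mul_left α).add ?_
    exact Asymptotics.isLittleO_const_left.2
      (Or.inr (tendsto_norm_atTop_atTop.comp (tendsto_rpow_atTop (by norm_num))))
  refine squeeze_zero' (Eventually.of_forall fun n => by positivity)
    ?_ (by simpa using (hlog.comp tendsto_natCast_atTop_atTop).const_mul (q ^ c))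
  filter_upwards [hℓ, eventually_ge_atTop 1] with n hℓn hn
  have hn' : (1 : ℝ) ≤ n := by exact_mod_cast hn
  have hpow : q ^ ℓ n ≤ q ^ c * √n := by
    calc q ^ ℓ n = q ^ (ℓ n : ℝ) := (Real.rpow_natCast q _).symm
      _ ≤ q ^ (α * Real.log n + c) := Real.rpow_le_rpow_of_exponent_le hq hℓn
      _ = q ^ c * Real.exp (Real.log q * (α * Real.log n)) := by
        rw [Real.rpow_add (by linarith), Real.rpow_def_of_pos (by linarith), mul_comm]
      _ ≤ q ^ c * Real.exp (Real.log n * (1 / 2)) := by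
        gcongr q ^ c * ?_
        exact Real.exp_le_exp.mpr (by nlinarith [Real.log_nonneg hn'])
      _ = q ^ c * √n := by
        rw [← Real.rpow_def_of_pos (by linarith), Real.sqrt_eq_rpow]
  calc ℓ n * q ^ ℓ n / n
      ≤ (α * Real.log n + c) * (q ^ c * √n) / n := by
        gcongr
        exact (Nat.cast_nonneg _).trans hℓn
    _ = q ^ c * ((α * Real.log n + c) / √n) := by
        field_simp
        rw [Real.sq_sqrt (by positivity)]

lemma eventually_length_ceil_logb_le {A : Type*} (w : ℕ → List A) {b p : ℝ} (hb : 0 ≤ b)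
    (hp : 0 < p) (n₁ : ℕ) (hlin : ∀ n : ℕ, n₁ ≤ n → ((w n).length : ℝ) ≤ b * n) :
    ∀ᶠ n : ℕ in atTop,
      ((w ⌈p * Real.logb 2 n⌉₊).length : ℝ) ≤ b * p / Real.log 2 * Real.log n + b := by
  have hceil : Tendsto (fun n : ℕ => ⌈p * Real.logb 2 n⌉₊) atTop atTop :=
    tendsto_nat_ceil_atTop.comp <|
      ((Real.tendsto_logb_atTop one_lt_two).comp tendsto_natCast_atTop_atTop).const_mul_atTop hp
  filter_upwards [hceil.eventually_ge_atTop n₁, eventually_ge_atTop 1] with n hn₁ hn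
  have hlog : 0 ≤ Real.logb 2 n := Real.logb_nonneg one_lt_two (by exact_mod_cast hn)
  calc ((w ⌈p * Real.logb 2 n⌉₊).length : ℝ)
      ≤ b * ⌈p * Real.logb 2 n⌉₊ := hlin _ hn₁
    _ ≤ b * (p * Real.logb 2 n + 1) := by
        gcongr
        exact (Nat.ceil_lt_add_one (by positivity)).le
    _ = b * p / Real.log 2 * Real.log n + b := by
        rw [Real.logb]
        ring

section Words

variable {A : Type*}

def wordsAvoiding (v : List A) (n : ℕ) : Set (List A) := {u | u.length = n ∧ ¬ v <:+: u}

lemma wordsAvoiding_subset (v : List A) (n : ℕ) :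
    wordsAvoiding v n ⊆ {u : List A | u.length = n} := fun _ hu => hu.1

variable [Fintype A]

lemma ncard_length_eq (n : ℕ) : {u : List A | u.length = n}.ncard = Fintype.card A ^ n := by
  rw [← Nat.card_coe_set_eq, ← card_vector n, ← Nat.card_eq_fintype_card]
  rfl

lemma ncard_wordsAvoiding_add_le (v : List A) (s : ℕ) :
    (wordsAvoiding v (v.length + s)).ncard ≤
      (Fintype.card A ^ v.length - 1) * (wordsAvoiding v s).ncard := by
  set k := v.length
  have hmaps : MapsTo (fun u : List A => (u.take k, u.drop k)) (wordsAvoiding v (k + s))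
      (({x | x.length = k} \ {v}) ×ˢ wordsAvoiding v s) := by
    rintro u ⟨hlen, hv⟩
    refine ⟨⟨by simp [hlen], fun h => hv (h ▸ (u.take_prefix k).isInfix)⟩,
      by simp [hlen], fun h => hv (h.trans (u.drop_suffix k).isInfix)⟩
  have hinj : InjOn (fun u : List A => (u.take k, u.drop k)) (wordsAvoiding v (k + s)) :=
    fun u₁ _ u₂ _ h => by
      simp only [Prod.mk.injEq] at h
      rw [← u₁.take_append_drop k, ← u₂.take_append_drop k, h.1, h.2]
  have hfin : (({x : List A | x.length = k} \ {v}) ×ˢ wordsAvoiding v s).Finite :=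
    (List.finite_length_eq A k).sdiff.prod
      ((List.finite_length_eq A s).subset (wordsAvoiding_subset v s))
  calc (wordsAvoiding v (k + s)).ncard
      ≤ (({x : List A | x.length = k} \ {v}) ×ˢ wordsAvoiding v s).ncard :=
        ncard_le_ncard_of_injOn _ hmaps hinj hfin
    _ = (Fintype.card A ^ k - 1) * (wordsAvoiding v s).ncard := by
        have hv : v ∈ {x : List A | x.length = k} := rfl
        rw [ncard_prod, ncard_sdiff_singleton_of_mem hv, ncard_length_eq]

lemma ncard_wordsAvoiding_mul_add_le (v : List A) (m r : ℕ) :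
    (wordsAvoiding v (m * v.length + r)).ncard ≤
      (Fintype.card A ^ v.length - 1) ^ m * Fintype.card A ^ r := by
  induction m with
  | zero =>
    simpa [← ncard_length_eq r] using
      ncard_le_ncard (wordsAvoiding_subset v r) (List.finite_length_eq A r)
  | succ m ih =>
    calc (wordsAvoiding v ((m + 1) * v.length + r)).ncard
        = (wordsAvoiding v (v.length + (m * v.length + r))).ncard := by ring_nf
      _ ≤ (Fintype.card A ^ v.length - 1) * (wordsAvoiding v (m * v.length + r)).ncard :=
        ncard_wordsAvoiding_add_le v _
      _ ≤ (Fintype.card A ^ v.length - 1) ^ (m + 1) * Fintype.card A ^ r := by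
        rw [pow_succ', mul_assoc]; gcongr

variable [Nonempty A]

lemma ncard_wordsAvoiding_div_le_pow (v : List A) (n : ℕ) :
    ((wordsAvoiding v n).ncard : ℝ) / (Fintype.card A : ℝ) ^ n ≤
      (1 - ((Fintype.card A : ℝ) ^ v.length)⁻¹) ^ (n / v.length) := by
  set q := Fintype.card A
  set k := v.length
  have hn_eq : n = n / k * k + n % k := (Nat.div_add_mod' n k).symm
  have hcount : ((wordsAvoiding v n).ncard : ℝ) ≤ ((q : ℝ) ^ k - 1) ^ (n / k) * q ^ (n % k) := by
    have h := ncard_wordsAvoiding_mul_add_le v (n / k) (n % k)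
    rw [← hn_eq] at h
    have hqk : 1 ≤ q ^ k := Nat.one_le_pow _ _ Fintype.card_pos
    calc ((wordsAvoiding v n).ncard : ℝ) ≤ ((q ^ k - 1) ^ (n / k) * q ^ (n % k) : ℕ) := by
          exact_mod_cast h
      _ = ((q : ℝ) ^ k - 1) ^ (n / k) * q ^ (n % k) := by push_cast [hqk]; ring
  calc ((wordsAvoiding v n).ncard : ℝ) / q ^ n
      ≤ ((q : ℝ) ^ k - 1) ^ (n / k) * q ^ (n % k) / q ^ n := by gcongr
    _ = (1 - ((q : ℝ) ^ k)⁻¹) ^ (n / k) := by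
      rw [hn_eq, pow_add, pow_mul', ← hn_eq, mul_div_mul_right _ _ (by positivity), ← div_pow,
        sub_div, div_self (by positivity), one_div]

lemma ncard_wordsAvoiding_div_le (v : List A) {n : ℕ} (hn : 0 < n) :
    ((wordsAvoiding v n).ncard : ℝ) / (Fintype.card A : ℝ) ^ n ≤
      2 * (v.length * (Fintype.card A : ℝ) ^ v.length / n) := by
  have hpow := ncard_wordsAvoiding_div_le_pow v n
  set q := Fintype.card A
  set k := v.length
  have hq : (1 : ℝ) ≤ q := by exact_mod_cast Fintype.card_pos
  have hn' : (0 : ℝ) < n := by exact_mod_cast hn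
  rcases Nat.eq_zero_or_pos k with hk | hk
  · have hempty : wordsAvoiding v n = ∅ := by
      simp [wordsAvoiding, List.length_eq_zero_iff.mp hk]
    simp [hempty, hk]
  rcases lt_or_ge n k with hnk | hkn
  · have hnk' : (n : ℝ) ≤ k := by exact_mod_cast hnk.le
    calc ((wordsAvoiding v n).ncard : ℝ) / q ^ n ≤ 1 := by
          simpa [Nat.div_eq_of_lt hnk] using hpow
      _ ≤ 2 * (k * q ^ k / n) := by
        have : (1 : ℝ) ≤ k * q ^ k / n := by
          rw [le_div_iff₀ hn']
          nlinarith [one_le_pow₀ (n := k) hq]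
        linarith
  set m := n / k
  have hm : 1 ≤ m := (Nat.one_le_div_iff hk).mpr hkn
  have hn_le : (n : ℝ) ≤ 2 * m * k := by
    have hlt : n < m * k + k := Nat.lt_div_mul_add hk
    have hle : n ≤ 2 * m * k := by nlinarith
    exact_mod_cast hle
  calc ((wordsAvoiding v n).ncard : ℝ) / q ^ n
      ≤ (1 - ((q : ℝ) ^ k)⁻¹) ^ m := hpow
    _ ≤ 1 / (m * ((q : ℝ) ^ k)⁻¹) := by
      rw [le_div_iff₀ (by positivity), mul_comm]
      exact mul_mul_one_sub_pow_le_one (by positivity) (inv_le_one_of_one_le₀ (one_le_pow₀ hq)) m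
    _ = q ^ k / m := by field_simp
    _ ≤ 2 * (k * q ^ k / n) := by
      rw [← mul_div_assoc, div_le_div_iff₀ (by positivity) hn']
      nlinarith [mul_le_mul_of_nonneg_left hn_le (by positivity : (0 : ℝ) ≤ q ^ k)]

lemma ncard_infix_div_eq (v : List A) (n : ℕ) :
    ({u : List A | u.length = n ∧ v <:+: u}.ncard : ℝ) / (Fintype.card A : ℝ) ^ n =
      1 - (wordsAvoiding v n).ncard / (Fintype.card A : ℝ) ^ n := by
  have hdiff : {u : List A | u.length = n ∧ v <:+: u} =
      {u : List A | u.length = n} \ wordsAvoiding v n := by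
    ext u
    simp only [wordsAvoiding, mem_ofPred_eq, Set.mem_sdiff]
    tauto
  have hsum :=
    ncard_sdiff_add_ncard_of_subset (wordsAvoiding_subset v n) (List.finite_length_eq A n)
  rw [hdiff, eq_sub_iff_add_eq, ← add_div, ← Nat.cast_add, hsum, ncard_length_eq, Nat.cast_pow,
    div_self (by positivity)]

end Words

/-- **Parameterized infinite monkey theorem for words** (Proposition 3.1).
If the lengths of the words `w n` grow at most linearly, then there is a constant
`p > 0` such that the fraction of words of length `n` over the alphabet `A` that
contain `w ⌈p · log₂ n⌉` as a (contiguous) subword tends to `1`. -/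
theorem parameterized_infinite_monkey_words
    {A : Type*} [Fintype A] [Nonempty A] (w : ℕ → List A)
    (b : ℝ) (hb : 0 < b) (n₁ : ℕ)
    (hlin : ∀ n : ℕ, n₁ ≤ n → ((w n).length : ℝ) ≤ b * n) :
    ∃ p : ℝ, 0 < p ∧
      Tendsto
        (fun n : ℕ =>
          (({u : List A | u.length = n ∧ w ⌈p * Real.logb 2 n⌉₊ <:+: u}.ncard : ℝ) /
            ((Fintype.card A : ℝ) ^ n)))
        atTop (nhds 1) := by
  have hq : (1 : ℝ) ≤ Fintype.card A := by exact_mod_cast Fintype.card_pos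
  have hlogq : 0 ≤ Real.log (Fintype.card A) := Real.log_nonneg hq
  set p := Real.log 2 / (2 * b * (Real.log (Fintype.card A) + 1))
  have hp : 0 < p := by positivity
  have hexp : b * p / Real.log 2 * Real.log (Fintype.card A) ≤ 1 / 2 := by
    simp only [p]
    field_simp
    linarith
  refine ⟨p, hp, ?_⟩
  have hbad : Tendsto (fun n : ℕ => ((wordsAvoiding (w ⌈p * Real.logb 2 n⌉₊) n).ncard : ℝ) /
      (Fintype.card A : ℝ) ^ n) atTop (nhds 0) :=
    squeeze_zero' (Eventually.of_forall fun n => by positivity)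
      (by filter_upwards [eventually_gt_atTop 0] with n hn using ncard_wordsAvoiding_div_le _ hn)
      (by simpa using (tendsto_mul_pow_div_of_le_mul_log hq hexp
        (eventually_length_ceil_logb_le w hb.le hp n₁ hlin)).const_mul 2)
  have hgood := (tendsto_const_nhds (x := (1 : ℝ))).sub hbad
  rw [sub_zero] at hgood
  exact hgood.congr fun n => (ncard_infix_div_eq _ n).symm
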